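/- Every connected component of the quasi-crystal graph Γ(hypo_n) contains exactly one highest-weight word: for every u ∈ 𝒜_n^* there is exactly one word w in the connected component Γ(hypo_n, u) such that e_i(w) is undefined for all i ∈ {1,...,n−1}. -/

import Mathlib

/-!
Common setup: words over the alphabet `𝒜_n = {1,…,n}` (modelled as `List ℕ`),
quasi-Kashiwara operators, the quasi-crystal graph, Kashiwara operators,
quasi-ribbon words, and the hypoplactic congruence.
-/

namespace HypoCrystal

noncomputable section
open scoped Classical

/-- `u` is a word over the alphabet `𝒜_n = {1,…,n}`. -/
def IsWord (n : ℕ) (u : List ℕ) : Prop := ∀ a ∈ u, 1 ≤ a ∧ a ≤ n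

/-- `u` has an `i`-inversion: some letter `i+1` occurs strictly to the left of some letter `i`. -/
def HasInv (i : ℕ) (u : List ℕ) : Prop :=
  ∃ v w x : List ℕ, u = v ++ (i + 1) :: w ++ i :: x

/-- Replace the first (leftmost) occurrence of `a` by `b`, if any; otherwise `none`. -/
def replaceFirst (a b : ℕ) : List ℕ → Option (List ℕ)
  | [] => none
  | x :: xs => if x = a then some (b :: xs) else (replaceFirst a b xs).map (x :: ·)

/-- The quasi-Kashiwara raising operator `e_i` (partial map, `none` = undefined):
if `u` has an `i`-inversion it is undefined; otherwise it replaces the leftmost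
letter `i+1` by `i` (undefined if there is no letter `i+1`). -/
def qe (i : ℕ) (u : List ℕ) : Option (List ℕ) :=
  if HasInv i u then none else replaceFirst (i + 1) i u

/-- The quasi-Kashiwara lowering operator `f_i` (partial map, `none` = undefined):
if `u` has an `i`-inversion it is undefined; otherwise it replaces the rightmost
letter `i` by `i+1` (undefined if there is no letter `i`). -/
def qf (i : ℕ) (u : List ℕ) : Option (List ℕ) :=
  if HasInv i u then none else (replaceFirst i (i + 1) u.reverse).map List.reverse

/-- Weight of a word: `wt u a` is the number of occurrences of the letter `a` in `u`. -/
def wt (u : List ℕ) : ℕ → ℕ := fun a => u.count a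

/-- There is an edge labelled `i` from `u` to `v` in the quasi-crystal graph `Γ(hypo_n)`. -/
def Edge (n i : ℕ) (u v : List ℕ) : Prop := 1 ≤ i ∧ i < n ∧ qf i u = some v

/-- `u` and `v` are adjacent (in the underlying undirected graph) in `Γ(hypo_n)`. -/
def Adj (n : ℕ) (u v : List ℕ) : Prop := ∃ i, Edge n i u v ∨ Edge n i v u

/-- `v` lies in the connected component `Γ(hypo_n, u)` of `u` in the quasi-crystal graph. -/
def SameComp (n : ℕ) : List ℕ → List ℕ → Prop := Relation.ReflTransGen (Adj n)

/-- `u` is a highest-weight word: no raising operator `e_i` is defined on `u`. -/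
def HighestWeight (n : ℕ) (u : List ℕ) : Prop := ∀ i, 1 ≤ i → i < n → qe i u = none

/-- `θ` is a quasi-crystal isomorphism from the component of `u` onto the component of `v`:
a weight-preserving bijection preserving labelled edges in both directions. -/
def IsQCIso (n : ℕ) (u v : List ℕ) (θ : List ℕ → List ℕ) : Prop :=
  Set.BijOn θ {x | SameComp n u x} {y | SameComp n v y} ∧
  (∀ x, SameComp n u x → wt (θ x) = wt x) ∧
  (∀ x y, SameComp n u x → SameComp n u y → ∀ i, (Edge n i x y ↔ Edge n i (θ x) (θ y)))

/-- `u ∼ v`: there is a quasi-crystal isomorphism between the components of `u` and `v`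
taking `u` to `v`. -/
def Sim (n : ℕ) (u v : List ℕ) : Prop :=
  ∃ θ : List ℕ → List ℕ, IsQCIso n u v θ ∧ θ u = v

/-- The standardization of `u`: position `k` receives the rank (starting at 1) of the
pair `(u_k, k)` among all pairs `(u_l, l)` ordered lexicographically. -/
def std (u : List ℕ) : List ℕ :=
  (List.range u.length).map fun k =>
    1 + ((List.range u.length).filter fun l =>
      u.getD l 0 < u.getD k 0 ∨ (u.getD l 0 = u.getD k 0 ∧ l < k)).length

/-- The maximal strictly decreasing factors of a word (the columns of its
quasi-ribbon tabloid, each read bottom-to-top). -/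
def decFactors : List ℕ → List (List ℕ)
  | [] => []
  | a :: rest =>
    match decFactors rest with
    | (b :: f) :: fs => if b < a then (a :: b :: f) :: fs else [a] :: (b :: f) :: fs
    | l => [a] :: l

/-- `w` is a quasi-ribbon word: its quasi-ribbon tabloid is a quasi-ribbon tableau,
i.e. the bottom entry of each column is ≤ the top entry of the next column. -/
def IsQRWord (w : List ℕ) : Prop :=
  (decFactors w).Chain' fun c d => c.headD 0 ≤ d.getLastD 0

/-- Row lengths (top to bottom) of the ribbon diagram whose column heights
(left to right) are given. -/
def rowLengths : List ℕ → List ℕ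
  | [] => []
  | [d] => List.replicate d 1
  | d :: e :: rest =>
    List.replicate (d - 1) 1 ++
      (match rowLengths (e :: rest) with
       | [] => [1]
       | r :: rs => (r + 1) :: rs)

/-- The shape (as a composition, listed top row first) of the quasi-ribbon tabloid of `w`. -/
def shape (w : List ℕ) : List ℕ := rowLengths ((decFactors w).map List.length)

/-- Columns of the quasi-ribbon tableau of shape `α` whose `j`-th row consists
entirely of symbols `j`, where rows are labelled starting from `j₀`. -/
def hwCols : List ℕ → ℕ → List (List ℕ)
  | [], _ => []
  | [a], j => List.replicate a [j]
  | a :: b :: rest, j =>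
    List.replicate (a - 1) [j] ++
      (match hwCols (b :: rest) (j + 1) with
       | [] => [[j]]
       | c :: cs => (c ++ [j]) :: cs)

/-- The column reading of the quasi-ribbon tableau of shape `α` whose `j`-th row
consists entirely of symbols `j`. -/
def hwQR (α : List ℕ) : List ℕ := (hwCols α 1).flatten

/-- The defining relations `R_hypo` of the hypoplactic monoid of rank `n`. -/
inductive HypoRel (n : ℕ) : List ℕ → List ℕ → Prop
  | knuth1 {a b c : ℕ} : 1 ≤ a → a ≤ b → b < c → c ≤ n → HypoRel n [a, c, b] [c, a, b]
  | knuth2 {a b c : ℕ} : 1 ≤ a → a < b → b ≤ c → c ≤ n → HypoRel n [b, a, c] [b, c, a]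
  | quasi1 {a b c d : ℕ} : 1 ≤ a → a ≤ b → b < c → c ≤ d → d ≤ n →
      HypoRel n [c, a, d, b] [a, c, b, d]
  | quasi2 {a b c d : ℕ} : 1 ≤ a → a < b → b ≤ c → c < d → d ≤ n →
      HypoRel n [b, d, a, c] [d, b, c, a]

/-- The hypoplactic congruence `≡_hypo`: the congruence on the free monoid generated
by the relations `R_hypo`. -/
inductive HypoCong (n : ℕ) : List ℕ → List ℕ → Prop
  | of {u v} : HypoRel n u v → HypoCong n u v
  | refl (u) : HypoCong n u u
  | symm {u v} : HypoCong n u v → HypoCong n v u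
  | trans {u v w} : HypoCong n u v → HypoCong n v w → HypoCong n u w
  | append {u v u' v'} : HypoCong n u v → HypoCong n u' v' →
      HypoCong n (u ++ u') (v ++ v')

/-- The signature word of `u` for index `i`: each letter `i` becomes `(position, true)`
(that is, `+`) and each letter `i+1` becomes `(position, false)` (that is, `−`). -/
def signWord (i : ℕ) (u : List ℕ) : List (ℕ × Bool) :=
  (u.zipIdx.map Prod.swap).filterMap fun pa =>
    if pa.2 = i then some (pa.1, true)
    else if pa.2 = i + 1 then some (pa.1, false) else none

/-- Iteratively delete factors `−+` from a signature word, producing the reduced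
word `+^p −^q`. -/
def reduce : List (ℕ × Bool) → List (ℕ × Bool)
  | [] => []
  | x :: rest =>
    match reduce rest with
    | y :: rest' => if x.2 = false ∧ y.2 = true then rest' else x :: y :: rest'
    | [] => [x]

/-- The Kashiwara raising operator `ẽ_i`, computed by the signature rule: change to `i`
the letter `i+1` corresponding to the leftmost `−` of the reduced signature word. -/
def KE (i : ℕ) (u : List ℕ) : Option (List ℕ) :=
  (((reduce (signWord i u)).filter fun x => !x.2).head?).map fun x => u.set x.1 i

/-- The Kashiwara lowering operator `f̃_i`, computed by the signature rule: change to `i+1`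
the letter `i` corresponding to the rightmost `+` of the reduced signature word. -/
def KF (i : ℕ) (u : List ℕ) : Option (List ℕ) :=
  (((reduce (signWord i u)).filter fun x => x.2).getLast?).map fun x => u.set x.1 (i + 1)

/-- The Schützenberger involution on `𝒜_n^*`: reverse the word and replace each
letter `a` by `n − a + 1`. -/
def sharp (n : ℕ) (u : List ℕ) : List ℕ := u.reverse.map fun a => n + 1 - a

/-- The largest letter occurring in `u` (0 for the empty word). -/
def maxLetter (u : List ℕ) : ℕ := u.foldr max 0

/-- `β` is coarser than `α` (`β ⪯ α`): they have the same weight and every proper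
partial sum of `β` is a proper partial sum of `α`. -/
def Coarser (β α : List ℕ) : Prop :=
  β.sum = α.sum ∧ ∀ p < β.length, ∃ m < α.length, (β.take p).sum = (α.take m).sum

end
end HypoCrystal

/-!
Each raising operator `e_i` lowers the sum of the letters, so repeated raising from any word
ends in a highest-weight word. Raising at two different indices `i ≠ j` changes two different
letters and the two operators commute, so raising is strongly confluent. By Church–Rosser,
being joinable by raising is then an equivalence relation; it contains every edge of
`Γ(hypo_n)`, hence relates any two words of a component, and two highest-weight words are
joinable only if they are equal.
-/

namespace HypoCrystal

theorem hasInv_cons {i a : ℕ} {u : List ℕ} :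
    HasInv i (a :: u) ↔ (a = i + 1 ∧ i ∈ u) ∨ HasInv i u := by
  constructor
  · rintro ⟨_ | ⟨b, v⟩, w, x, h⟩
    · simp only [List.nil_append, List.cons_append, List.cons.injEq] at h
      exact Or.inl ⟨h.1, by simp [h.2]⟩
    · simp only [List.cons_append, List.cons.injEq] at h
      exact Or.inr ⟨v, w, x, h.2⟩
  · rintro (⟨rfl, hm⟩ | ⟨v, w, x, rfl⟩)
    · obtain ⟨s, t, rfl⟩ := List.append_of_mem hm
      exact ⟨[], s, t, rfl⟩
    · exact ⟨a :: v, w, x, rfl⟩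

theorem HasInv.mem {i : ℕ} {u : List ℕ} (h : HasInv i u) : i + 1 ∈ u ∧ i ∈ u := by
  obtain ⟨v, w, x, rfl⟩ := h
  simp

theorem hasInv_append {i : ℕ} {p q : List ℕ} :
    HasInv i (p ++ q) ↔ HasInv i p ∨ HasInv i q ∨ (i + 1 ∈ p ∧ i ∈ q) := by
  induction p with
  | nil => simp [HasInv]
  | cons a p ih =>
    simp only [List.cons_append, hasInv_cons, ih, List.mem_cons, List.mem_append]
    tauto

theorem hasInv_append_succ_cons {i : ℕ} {p q : List ℕ} (hp : i + 1 ∉ p) :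
    HasInv i (p ++ (i + 1) :: q) ↔ i ∈ q := by
  have hnp : ¬HasInv i p := fun h => hp h.mem.1
  have hq : HasInv i q → i ∈ q := fun h => h.mem.2
  simp only [hasInv_append, hasInv_cons, List.mem_cons]
  tauto

theorem hasInv_append_cons {i : ℕ} {p q : List ℕ} (hq : i ∉ q) :
    HasInv i (p ++ i :: q) ↔ i + 1 ∈ p := by
  have hp : HasInv i p → i + 1 ∈ p := fun h => h.mem.1
  have hnq : ¬HasInv i q := fun h => hq h.mem.2
  simp only [hasInv_append, hasInv_cons, List.mem_cons, Nat.ne_add_one, false_and, true_or]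
  tauto

theorem replaceFirst_eq_some_iff {a b : ℕ} {u v : List ℕ} :
    replaceFirst a b u = some v ↔ ∃ p q, u = p ++ a :: q ∧ a ∉ p ∧ v = p ++ b :: q := by
  induction u generalizing v with
  | nil => simp [replaceFirst]
  | cons x xs ih =>
    by_cases hx : x = a
    · subst hx
      simp only [replaceFirst, if_true, Option.some.injEq]
      constructor
      · rintro rfl
        exact ⟨[], xs, rfl, List.not_mem_nil, rfl⟩
      · rintro ⟨_ | ⟨y, p⟩, q, h, hp, rfl⟩
        · simp_all
        · simp only [List.cons_append, List.cons.injEq] at h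
          simp [h.1] at hp
    · simp only [replaceFirst, if_neg hx, Option.map_eq_some_iff, ih]
      constructor
      · rintro ⟨_, ⟨p, q, rfl, hp, rfl⟩, rfl⟩
        exact ⟨x :: p, q, rfl, by simp [hp, Ne.symm hx], rfl⟩
      · rintro ⟨_ | ⟨y, p⟩, q, h, hp, rfl⟩
        · simp only [List.nil_append, List.cons.injEq] at h
          exact absurd h.1 hx
        · simp only [List.cons_append, List.cons.injEq] at h
          obtain ⟨rfl, rfl⟩ := h
          exact ⟨_, ⟨p, q, rfl, fun h => hp (List.mem_cons_of_mem _ h), rfl⟩, rfl⟩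

theorem qe_eq_some_iff {i : ℕ} {u v : List ℕ} :
    qe i u = some v ↔
      ∃ p q, u = p ++ (i + 1) :: q ∧ i + 1 ∉ p ∧ i ∉ q ∧ v = p ++ i :: q := by
  unfold qe
  constructor
  · intro h
    split_ifs at h with hinv
    obtain ⟨p, q, rfl, hp, rfl⟩ := replaceFirst_eq_some_iff.mp h
    exact ⟨p, q, rfl, hp, fun hq => hinv ((hasInv_append_succ_cons hp).mpr hq), rfl⟩
  · rintro ⟨p, q, rfl, hp, hq, rfl⟩
    rw [if_neg fun h => hq ((hasInv_append_succ_cons hp).mp h)]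
    exact replaceFirst_eq_some_iff.mpr ⟨p, q, rfl, hp, rfl⟩

theorem qf_eq_some_iff {i : ℕ} {u v : List ℕ} :
    qf i u = some v ↔
      ∃ p q, u = p ++ i :: q ∧ i + 1 ∉ p ∧ i ∉ q ∧ v = p ++ (i + 1) :: q := by
  unfold qf
  constructor
  · intro h
    split_ifs at h with hinv
    obtain ⟨_, hw, rfl⟩ := Option.map_eq_some_iff.mp h
    obtain ⟨q, p, hu, hq, rfl⟩ := replaceFirst_eq_some_iff.mp hw
    rw [List.reverse_eq_iff] at hu
    simp only [List.reverse_append, List.reverse_cons, List.append_assoc,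
      List.singleton_append] at hu ⊢
    subst hu
    have hq' : i ∉ q.reverse := by simpa using hq
    exact ⟨p.reverse, q.reverse, rfl, fun hp => hinv ((hasInv_append_cons hq').mpr hp), hq', rfl⟩
  · rintro ⟨p, q, rfl, hp, hq, rfl⟩
    rw [if_neg fun h => hp ((hasInv_append_cons hq).mp h)]
    refine Option.map_eq_some_iff.mpr ⟨q.reverse ++ (i + 1) :: p.reverse, ?_, by simp⟩
    exact replaceFirst_eq_some_iff.mpr ⟨q.reverse, p.reverse, by simp, by simpa using hq, rfl⟩

theorem qe_eq_some_iff_qf_eq_some {i : ℕ} {u v : List ℕ} : qe i u = some v ↔ qf i v = some u := by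
  rw [qe_eq_some_iff, qf_eq_some_iff]
  constructor <;> rintro ⟨p, q, rfl, hp, hq, rfl⟩ <;> exact ⟨p, q, rfl, hp, hq, rfl⟩

theorem qe_append_cons_append_cons {i j : ℕ} {p r q : List ℕ} (hij : i ≠ j)
    (hip : i + 1 ∉ p) (hiq : i ∉ r ++ (j + 1) :: q)
    (hjp : j + 1 ∉ p ++ (i + 1) :: r) (hjq : j ∉ q) :
    qe j (p ++ i :: r ++ (j + 1) :: q) = some (p ++ i :: r ++ j :: q) ∧
      qe i (p ++ (i + 1) :: r ++ j :: q) = some (p ++ i :: r ++ j :: q) := by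
  simp only [List.mem_append, List.mem_cons, not_or] at hiq hjp
  constructor
  · refine qe_eq_some_iff.mpr ⟨p ++ i :: r, q, rfl, ?_, hjq, rfl⟩
    simp only [List.mem_append, List.mem_cons, not_or]
    exact ⟨hjp.1, fun h => hiq.2.1 h.symm, hjp.2.2⟩
  · refine qe_eq_some_iff.mpr ⟨p, r ++ j :: q, by simp, hip, ?_, by simp⟩
    simp only [List.mem_append, List.mem_cons, not_or]
    exact ⟨hiq.1, hij, hiq.2.2⟩

theorem qe_diamond {i j : ℕ} {u v v' : List ℕ} (hij : i ≠ j)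
    (hv : qe i u = some v) (hv' : qe j u = some v') :
    ∃ w, qe j v = some w ∧ qe i v' = some w := by
  obtain ⟨p, q, rfl, hip, hiq, rfl⟩ := qe_eq_some_iff.mp hv
  obtain ⟨p', q', hu, hjp, hjq, rfl⟩ := qe_eq_some_iff.mp hv'
  rcases List.append_eq_append_iff.mp hu with ⟨_ | ⟨x, r⟩, rfl, h⟩ | ⟨_ | ⟨x, r⟩, rfl, h⟩
  · simp only [List.nil_append, List.cons.injEq, add_left_inj] at h
    exact absurd h.1 hij
  · simp only [List.cons_append, List.cons.injEq] at h
    obtain ⟨rfl, rfl⟩ := h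
    obtain ⟨h1, h2⟩ := qe_append_cons_append_cons hij hip hiq hjp hjq
    exact ⟨_, by simpa using h1, by simpa using h2⟩
  · simp only [List.nil_append, List.cons.injEq, add_left_inj] at h
    exact absurd h.1.symm hij
  · simp only [List.cons_append, List.cons.injEq] at h
    obtain ⟨rfl, rfl⟩ := h
    obtain ⟨h1, h2⟩ := qe_append_cons_append_cons (Ne.symm hij) hjp hjq hip hiq
    exact ⟨_, by simpa using h2, by simpa using h1⟩

def Raise (n : ℕ) (u v : List ℕ) : Prop := ∃ i, 1 ≤ i ∧ i < n ∧ qe i u = some v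

theorem Raise.sum_lt {n : ℕ} {u v : List ℕ} (h : Raise n u v) : v.sum < u.sum := by
  obtain ⟨i, -, -, hi⟩ := h
  obtain ⟨p, q, rfl, -, -, rfl⟩ := qe_eq_some_iff.mp hi
  simp

theorem highestWeight_iff_forall_not_raise {n : ℕ} {u : List ℕ} :
    HighestWeight n u ↔ ∀ v, ¬Raise n u v := by
  simp only [HighestWeight, Raise, Option.eq_none_iff_forall_ne_some]
  constructor
  · rintro h v ⟨i, hi1, hin, hi⟩
    exact h i hi1 hin v hi
  · intro h i hi1 hin v hi
    exact h v ⟨i, hi1, hin, hi⟩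

theorem exists_raises_highestWeight (n : ℕ) (u : List ℕ) :
    ∃ w, Relation.ReflTransGen (Raise n) u w ∧ HighestWeight n w := by
  induction h : u.sum using Nat.strong_induction_on generalizing u with
  | _ m ih =>
    by_cases hu : ∃ v, Raise n u v
    · obtain ⟨v, huv⟩ := hu
      obtain ⟨w, hvw, hw⟩ := ih v.sum (h ▸ huv.sum_lt) v rfl
      exact ⟨w, .head huv hvw, hw⟩
    · exact ⟨u, .refl, highestWeight_iff_forall_not_raise.mpr (not_exists.mp hu)⟩

theorem raise_diamond {n : ℕ} {u v v' : List ℕ} (hv : Raise n u v) (hv' : Raise n u v') :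
    ∃ w, Relation.ReflGen (Raise n) v w ∧ Relation.ReflTransGen (Raise n) v' w := by
  obtain ⟨i, hi1, hin, hi⟩ := hv
  obtain ⟨j, hj1, hjn, hj⟩ := hv'
  by_cases hij : i = j
  · subst hij
    obtain rfl : v = v' := Option.some.inj (hi.symm.trans hj)
    exact ⟨v, .refl, .refl⟩
  · obtain ⟨w, hvw, hv'w⟩ := qe_diamond hij hi hj
    exact ⟨w, .single ⟨j, hj1, hjn, hvw⟩, .single ⟨i, hi1, hin, hv'w⟩⟩

theorem adj_iff_raise_or_raise {n : ℕ} {u v : List ℕ} :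
    Adj n u v ↔ Raise n u v ∨ Raise n v u := by
  simp only [Adj, Edge, Raise, qe_eq_some_iff_qf_eq_some]
  grind

theorem equivalence_join_raises (n : ℕ) :
    Equivalence (Relation.Join (Relation.ReflTransGen (Raise n))) :=
  Relation.equivalence_join_reflTransGen fun _ _ _ => raise_diamond

theorem SameComp.join {n : ℕ} {u v : List ℕ} (h : SameComp n u v) :
    Relation.Join (Relation.ReflTransGen (Raise n)) u v := by
  induction h with
  | refl => exact (equivalence_join_raises n).refl u
  | tail _ hadj ih =>
    refine (equivalence_join_raises n).trans ih ?_
    rcases adj_iff_raise_or_raise.mp hadj with h | h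
    · exact ⟨_, .single h, .refl⟩
    · exact ⟨_, .refl, .single h⟩

theorem sameComp_of_raises {n : ℕ} {u v : List ℕ} (h : Relation.ReflTransGen (Raise n) u v) :
    SameComp n u v :=
  Relation.ReflTransGen.mono (fun _ _ huv => adj_iff_raise_or_raise.mpr (.inl huv)) _ _ h

theorem eq_of_sameComp_of_highestWeight {n : ℕ} {u w w' : List ℕ} (huw : SameComp n u w)
    (huw' : SameComp n u w') (hw : HighestWeight n w) (hw' : HighestWeight n w') : w = w' := by
  obtain ⟨d, hwd, hw'd⟩ := (equivalence_join_raises n).trans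
    ((equivalence_join_raises n).symm huw.join) huw'.join
  rw [Relation.reflTransGen_iff_eq (highestWeight_iff_forall_not_raise.mp hw)] at hwd
  rw [Relation.reflTransGen_iff_eq (highestWeight_iff_forall_not_raise.mp hw')] at hw'd
  rw [← hwd, hw'd]

theorem unique_highestWeight_in_component_general (n : ℕ) (u : List ℕ) :
    ∃! w, SameComp n u w ∧ HighestWeight n w := by
  obtain ⟨w, huw, hw⟩ := exists_raises_highestWeight n u
  exact ⟨w, ⟨sameComp_of_raises huw, hw⟩,
    fun w' ⟨huw', hw'⟩ => eq_of_sameComp_of_highestWeight huw' (sameComp_of_raises huw) hw' hw⟩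

/-- Every connected component of the quasi-crystal graph `Γ(hypo_n)`
contains exactly one highest-weight word: for every `u ∈ 𝒜_n^*` there is exactly one
word `w` in the component `Γ(hypo_n, u)` with `e_i(w)` undefined for all
`i ∈ {1,…,n−1}`. -/
theorem unique_highestWeight_in_component (n : ℕ) (u : List ℕ) (hu : IsWord n u) :
    ∃! w, SameComp n u w ∧ HighestWeight n w :=
  unique_highestWeight_in_component_general n u

end HypoCrystal
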